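/- arXiv:2602.17788 — 5 statements merged into one kernel-verified Lean document; each statement's English description precedes it below -/
import Mathlib

section
/- Let F be a loop, A an abelian group, and θ, μ ∈ C(F,A) normalized cocycles. If f : X(F,A,θ) → X(F,A,μ) is a loop isomorphism with f({1}×A) = {1}×A, then there exists a triple (α,β,τ) ∈ Aut*(F,A) such that f(x,a) = (x^α, τ(x) + a^β) for all (x,a), and μ = θ^{(α,β,τ)}. -/
universe u v

/-- A loop: a set with binary operation, two-sided identity, and bijective translations. -/
class Loop (Q : Type u) extends Mul Q, One Q where
  one_mul : ∀ x : Q, 1 * x = x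
  mul_one : ∀ x : Q, x * 1 = x
  mulLeft_bij : ∀ x : Q, Function.Bijective (fun y : Q => x * y)
  mulRight_bij : ∀ x : Q, Function.Bijective (fun y : Q => y * x)

/-- `z` commutes and associates (in all three positions) with all elements,
with respect to the binary operation `mul`. -/
def IsCentral {Q : Type u} (mul : Q → Q → Q) (z : Q) : Prop :=
  (∀ x, mul z x = mul x z) ∧
  (∀ x y, mul z (mul x y) = mul (mul z x) y) ∧
  (∀ x y, mul x (mul z y) = mul (mul x z) y) ∧
  (∀ x y, mul x (mul y z) = mul (mul x y) z)

/-- Normalized cocycle: θ(1,x) = θ(x,1) = 0. -/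
def IsCocycle {F : Type u} {A : Type v} [One F] [AddCommGroup A]
    (θ : F → F → A) : Prop :=
  ∀ x : F, θ 1 x = 0 ∧ θ x 1 = 0

/-- Multiplication of the central extension X(F,A,θ) on F × A. -/
def cmul {F : Type u} {A : Type v} [Mul F] [AddCommGroup A]
    (θ : F → F → A) (p q : F × A) : F × A :=
  (p.1 * q.1, p.2 + q.2 + θ p.1 q.1)

/-- Left-normed powers: `lpow mul z n` is z^(n+1). -/
def lpow {Q : Type u} (mul : Q → Q → Q) (z : Q) : ℕ → Q
  | 0 => z
  | n + 1 => mul (lpow mul z n) z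

/-- Coboundary of τ. -/
def coboundary {F : Type u} {A : Type v} [Mul F] [AddCommGroup A]
    (τ : F → A) : F → F → A :=
  fun x y => τ (x * y) - τ x - τ y

/-- The affine automorphism group Aut*(F,A): triples (α,β,τ). -/
structure AutStar (F : Type u) (A : Type v) [Mul F] [One F] [AddCommGroup A] where
  α : F ≃ F
  mapMul : ∀ x y : F, α (x * y) = α x * α y
  mapOne : α 1 = 1
  β : A ≃+ A
  τ : F → A
  τone : τ 1 = 0

namespace AutStar

variable {F : Type u} {A : Type v} [Mul F] [One F] [AddCommGroup A]

/-- Multiplication (α,β,τ)(α',β',τ') = (αα', ββ', ατ' + τβ'). -/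
def mul (g h : AutStar F A) : AutStar F A where
  α := g.α.trans h.α
  mapMul := fun x y => by
    simp only [Equiv.trans_apply, g.mapMul, h.mapMul]
  mapOne := by simp only [Equiv.trans_apply, g.mapOne, h.mapOne]
  β := g.β.trans h.β
  τ := fun x => h.τ (g.α x) + h.β (g.τ x)
  τone := by simp only [g.mapOne, h.τone, g.τone, map_zero, add_zero]

/-- The identity element of Aut*(F,A). -/
def one (F : Type u) (A : Type v) [Mul F] [One F] [AddCommGroup A] : AutStar F A where
  α := Equiv.refl F
  mapMul := fun _ _ => rfl
  mapOne := rfl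
  β := AddEquiv.refl A
  τ := fun _ => 0
  τone := rfl

end AutStar

/-- The affine action of (α,β,τ) on F × A. -/
def actP {F : Type u} {A : Type v} [Mul F] [One F] [AddCommGroup A]
    (p : F × A) (g : AutStar F A) : F × A :=
  (g.α p.1, g.β p.2 + g.τ p.1)

/-- The affine action of (α,β,τ) on cocycles. -/
def actC {F : Type u} {A : Type v} [Mul F] [One F] [AddCommGroup A]
    (θ : F → F → A) (g : AutStar F A) : F → F → A :=
  fun x y =>
    g.β (θ (g.α.symm x) (g.α.symm y)) + g.τ (g.α.symm (x * y))
      - g.τ (g.α.symm x) - g.τ (g.α.symm y)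

/-- Every loop isomorphism X(F,A,θ) → X(F,A,μ) mapping {1}×A onto itself is induced
by a triple (α,β,τ) ∈ Aut*(F,A), and then μ = θ^{(α,β,τ)}. -/
theorem stmt9 {F : Type u} {A : Type v} [Loop F] [AddCommGroup A]
    (θ μ : F → F → A) (hθ : IsCocycle θ) (hμ : IsCocycle μ)
    (f : F × A → F × A) (hbij : Function.Bijective f)
    (hhom : ∀ p q : F × A, f (cmul θ p q) = cmul μ (f p) (f q))
    (hA : f '' {p : F × A | p.1 = 1} = {p : F × A | p.1 = 1}) :
    ∃ g : AutStar F A,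
      (∀ (x : F) (a : A), f (x, a) = (g.α x, g.τ x + g.β a)) ∧
      μ = actC θ g := by
  classical
  obtain ⟨finj, fsurj⟩ := hbij
  have θl := fun x => (hθ x).1
  have θr := fun x => (hθ x).2
  have μl := fun x => (hμ x).1
  have μr := fun x => (hμ x).2
  -- f sends {1}×A into itself
  have h1 : ∀ a : A, (f (1, a)).1 = 1 := by
    intro a
    have : f (1, a) ∈ {p : F × A | p.1 = 1} := by
      rw [← hA]; exact ⟨(1, a), rfl, rfl⟩
    exact this
  set β0 : A → A := fun a => (f (1, a)).2 with hβ0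
  have hf1 : ∀ a, f (1, a) = (1, β0 a) := fun a => Prod.ext (h1 a) rfl
  have βadd : ∀ a b, β0 (a + b) = β0 a + β0 b := by
    intro a b
    have key := hhom (1, a) (1, b)
    have e1 : cmul θ ((1 : F), a) (1, b) = (1, a + b) := by
      simp [cmul, Loop.one_mul, θl]
    rw [e1, hf1, hf1, hf1] at key
    have : β0 (a + b) = β0 a + β0 b + μ 1 1 := congrArg Prod.snd key
    simpa [μl] using this
  have βinj : Function.Injective β0 := by
    intro a b hab
    have : f (1, a) = f (1, b) := by rw [hf1, hf1, hab]
    exact (Prod.ext_iff.1 (finj this)).2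
  have βsurj : Function.Surjective β0 := by
    intro c
    have : ((1 : F), c) ∈ f '' {p : F × A | p.1 = 1} := by
      rw [hA]; exact rfl
    obtain ⟨p, hp, hfp⟩ := this
    refine ⟨p.2, ?_⟩
    have hp1 : p = (1, p.2) := Prod.ext hp rfl
    rw [hp1] at hfp
    rw [hf1] at hfp
    exact (Prod.ext_iff.1 hfp).2
  set α0 : F → F := fun x => (f (x, 0)).1 with hα0
  set τ0 : F → A := fun x => (f (x, 0)).2 with hτ0
  have hfx : ∀ x : F, f (x, 0) = (α0 x, τ0 x) := fun x => rfl
  have hfa : ∀ (x : F) (a : A), f (x, a) = (α0 x, τ0 x + β0 a) := by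
    intro x a
    have e1 : cmul θ (x, (0 : A)) (1, a) = (x, a) := by
      simp [cmul, Loop.mul_one, θr]
    have key := hhom (x, 0) (1, a)
    rw [e1, hfx, hf1] at key
    rw [key]
    simp [cmul, Loop.mul_one, μr]
  -- key cocycle identity and multiplicativity
  have keyxy : ∀ x y : F,
      α0 (x * y) = α0 x * α0 y ∧
      τ0 (x * y) + β0 (θ x y) = τ0 x + τ0 y + μ (α0 x) (α0 y) := by
    intro x y
    have key := hhom (x, 0) (y, 0)
    have e1 : cmul θ (x, (0 : A)) (y, 0) = (x * y, θ x y) := by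
      simp [cmul]
    rw [e1, hfa, hfx, hfx] at key
    have e2 : cmul μ (α0 x, τ0 x) (α0 y, τ0 y)
        = (α0 x * α0 y, τ0 x + τ0 y + μ (α0 x) (α0 y)) := rfl
    rw [e2] at key
    exact Prod.ext_iff.1 key
  have β00 : β0 0 = 0 := by
    have := βadd 0 0
    simpa using this.symm
  have αinj : Function.Injective α0 := by
    intro x y hxy
    obtain ⟨a, ha⟩ := βsurj (τ0 x - τ0 y)
    have : f (y, a) = f (x, 0) := by
      rw [hfa, hfa, ha, hxy]
      simp [β00]
    have := finj this
    exact ((Prod.ext_iff.1 this).1).symm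
  have αsurj : Function.Surjective α0 := by
    intro y
    obtain ⟨p, hp⟩ := fsurj (y, 0)
    refine ⟨p.1, ?_⟩
    have : f (p.1, p.2) = (y, 0) := by rwa [Prod.mk.eta]
    rw [hfa] at this
    exact (Prod.ext_iff.1 this).1
  have αone : α0 1 = 1 := h1 0
  have τone : τ0 1 = 0 := by
    have : f ((1 : F), (0 : A)) = (1, β0 0) := hf1 0
    rw [hfx] at this
    have h2 : τ0 1 = β0 0 := by simpa using congrArg Prod.snd this
    rw [h2, β00]
  set g : AutStar F A :=
    { α := Equiv.ofBijective α0 ⟨αinj, αsurj⟩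
      mapMul := fun x y => (keyxy x y).1
      mapOne := αone
      β := AddEquiv.mk' (Equiv.ofBijective β0 ⟨βinj, βsurj⟩) βadd
      τ := τ0
      τone := τone } with hg
  refine ⟨g, ?_, ?_⟩
  · intro x a
    exact hfa x a
  · funext x y
    set u := g.α.symm x with hu
    set v := g.α.symm y with hv
    have hxu : α0 u = x := g.α.apply_symm_apply x
    have hyv : α0 v = y := g.α.apply_symm_apply y
    have huv : g.α.symm (x * y) = u * v := by
      have : x * y = g.α (u * v) := by
        show x * y = α0 (u * v)
        rw [(keyxy u v).1, hxu, hyv]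
      rw [this, Equiv.symm_apply_apply]
    have key := (keyxy u v).2
    rw [hxu, hyv] at key
    simp only [actC, ← hu, ← hv, huv]
    show μ x y = β0 (θ u v) + τ0 (u * v) - τ0 u - τ0 v
    have : μ x y = τ0 (u * v) + β0 (θ u v) - τ0 u - τ0 v := by
      rw [key]; abel
    rw [this]; abel
end

section
/- Let F be a loop and A an abelian group. Two normalized cocycles θ, μ ∈ C(F,A) lie in the same Aut*(F,A)-orbit if and only if there exists a loop isomorphism f : X(F,A,θ) → X(F,A,μ) with f({1}×A) = {1}×A. Consequently, the orbits of Aut*(F,A) on C(F,A) are in bijection with isomorphism classes of pairs (L,A) where A ≤ Z(L) and L/A ≅ F. -/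
universe u v

/-- θ, μ lie in the same Aut*(F,A)-orbit. -/
def InSameOrbit {F : Type u} {A : Type v} [Mul F] [One F] [AddCommGroup A]
    (θ μ : F → F → A) : Prop :=
  ∃ g : AutStar F A, actC θ g = μ

/-- The extensions X(F,A,θ) and X(F,A,μ) are isomorphic as central extensions,
i.e. via a loop isomorphism mapping {1}×A onto itself. -/
def ExtIso {F : Type u} {A : Type v} [Mul F] [One F] [AddCommGroup A]
    (θ μ : F → F → A) : Prop :=
  ∃ f : (F × A) ≃ (F × A),
    (∀ p q : F × A, f (cmul θ p q) = cmul μ (f p) (f q)) ∧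
    (f '' {p : F × A | p.1 = 1} = {p : F × A | p.1 = 1})

/-!
An element `(α, β, τ)` of Aut*(F,A) acts on `F × A` by `(x, a) ↦ (α x, β a + τ x)`, and this
map is an isomorphism `X(F,A,θ) → X(F,A,θ^(α,β,τ))` fixing `{1} × A` setwise. Conversely, an
isomorphism `f : X(F,A,θ) → X(F,A,μ)` preserving `{1} × A` splits as
`f (x, a) = (α x, β a + τ x)` with `α x = (f (x, 0)).1`, `β a = (f (1, a)).2` and
`τ x = (f (x, 0)).2`, because `(x, a) = (x, 0) · (1, a)` for a normalized cocycle; comparing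
`f ((x, 0) · (y, 0))` with `f (x, 0) · f (y, 0)` then gives `θ^(α,β,τ) = μ`. The two equivalence
relations on normalized cocycles thus coincide, and so do their quotients.
-/

namespace AutStar

variable {F : Type u} {A : Type v} [Mul F] [One F] [AddCommGroup A]

def toEquiv (g : AutStar F A) : F × A ≃ F × A where
  toFun p := actP p g
  invFun p := (g.α.symm p.1, g.β.symm (p.2 - g.τ (g.α.symm p.1)))
  left_inv p := by simp [actP]
  right_inv p := by simp [actP]

theorem actP_cmul (g : AutStar F A) (θ : F → F → A) (p q : F × A) :
    actP (cmul θ p q) g = cmul (actC θ g) (actP p g) (actP q g) := by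
  have hsymm : g.α.symm (g.α p.1 * g.α q.1) = p.1 * q.1 := by
    rw [← g.mapMul, Equiv.symm_apply_apply]
  simp only [actP, actC, cmul, g.mapMul, hsymm, Equiv.symm_apply_apply, map_add]
  ext <;> simp only
  abel

theorem toEquiv_image_fst_eq_one (g : AutStar F A) :
    g.toEquiv '' {p : F × A | p.1 = 1} = {p : F × A | p.1 = 1} := by
  ext ⟨x, a⟩
  constructor
  · rintro ⟨q, hq, hgq⟩
    obtain rfl : g.α q.1 = x := congrArg Prod.fst hgq
    exact (congrArg g.α hq).trans g.mapOne
  · rintro (rfl : x = 1)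
    exact ⟨(1, g.β.symm a), rfl, by simp [toEquiv, actP, g.mapOne, g.τone]⟩

end AutStar

theorem extIso_of_inSameOrbit {F : Type u} {A : Type v} [Mul F] [One F] [AddCommGroup A]
    {θ μ : F → F → A} (h : InSameOrbit θ μ) : ExtIso θ μ := by
  obtain ⟨g, rfl⟩ := h
  exact ⟨g.toEquiv, g.actP_cmul θ, g.toEquiv_image_fst_eq_one⟩

namespace ExtIso

section

variable {F : Type u} {A : Type v} [One F] {f : F × A ≃ F × A}
  (hset : f '' {p : F × A | p.1 = 1} = {p : F × A | p.1 = 1})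
include hset

theorem fst_apply_one (a : A) : (f (1, a)).1 = 1 := by
  have hmem : f (1, a) ∈ f '' {p : F × A | p.1 = 1} := ⟨(1, a), rfl, rfl⟩
  rwa [hset] at hmem

theorem bijective_snd_apply_one : Function.Bijective fun a : A => (f (1, a)).2 := by
  refine ⟨fun a b hab => ?_, fun c => ?_⟩
  · have hfab : f (1, a) = f (1, b) := by
      rw [← Prod.mk.eta (p := f (1, a)), ← Prod.mk.eta (p := f (1, b)),
        fst_apply_one hset, fst_apply_one hset]
      exact congrArg _ hab
    exact congrArg Prod.snd (f.injective hfab)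
  · obtain ⟨⟨x, a⟩, hx, hfa⟩ : ((1 : F), c) ∈ f '' {p : F × A | p.1 = 1} := by
      rw [hset]; rfl
    simp only [Set.mem_ofPred_eq] at hx
    subst hx
    exact ⟨a, congrArg Prod.snd hfa⟩

end

variable {F : Type u} {A : Type v} [Loop F] [AddCommGroup A] {θ μ : F → F → A}
  {f : F × A ≃ F × A} (hθ : IsCocycle θ) (hμ : IsCocycle μ)
  (hf : ∀ p q : F × A, f (cmul θ p q) = cmul μ (f p) (f q))
  (hset : f '' {p : F × A | p.1 = 1} = {p : F × A | p.1 = 1})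
include hθ hμ hf hset

theorem apply_eq (x : F) (a : A) :
    f (x, a) = ((f (x, 0)).1, (f (1, a)).2 + (f (x, 0)).2) := by
  have hsplit : cmul θ (x, 0) (1, a) = (x, a) := by
    simp [cmul, (hθ x).2, Loop.mul_one]
  rw [← hsplit, hf, ← Prod.mk.eta (p := f (1, a)), fst_apply_one hset]
  ext
  · exact Loop.mul_one _
  · simp only [cmul, (hμ _).2, add_zero]
    exact add_comm _ _

theorem snd_apply_one_add (a b : A) :
    (f (1, a + b)).2 = (f (1, a)).2 + (f (1, b)).2 := by
  have hsum : cmul θ (1, a) (1, b) = (1, a + b) := by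
    simp [cmul, (hθ 1).1, Loop.mul_one]
  rw [← hsum, hf, cmul, fst_apply_one hset, fst_apply_one hset, (hμ 1).1, add_zero]

theorem apply_mul_zero (x y : F) :
    (f (x * y, 0)).1 = (f (x, 0)).1 * (f (y, 0)).1 ∧
      μ (f (x, 0)).1 (f (y, 0)).1
        = (f (1, θ x y)).2 + (f (x * y, 0)).2 - (f (x, 0)).2 - (f (y, 0)).2 := by
  have hprod := hf (x, 0) (y, 0)
  rw [cmul, apply_eq hθ hμ hf hset (x * y)] at hprod
  simp only [cmul, Prod.mk.injEq, add_zero, zero_add] at hprod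
  refine ⟨hprod.1, ?_⟩
  rw [hprod.2]
  abel

theorem bijective_fst_apply_zero : Function.Bijective fun x : F => (f (x, 0)).1 := by
  refine ⟨fun x y hxy => ?_, fun z => ⟨(f.symm (z, 0)).1, ?_⟩⟩
  · -- surjectivity of `β` gives `a` with `f (x, a) = f (y, 0)`
    obtain ⟨a, ha⟩ := (bijective_snd_apply_one hset).2 ((f (y, 0)).2 - (f (x, 0)).2)
    have hfe : f (x, a) = f (y, 0) := by
      rw [apply_eq hθ hμ hf hset x a, apply_eq hθ hμ hf hset y 0]
      simp only at hxy ha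
      rw [hxy, ha, sub_add_cancel, ← apply_eq hθ hμ hf hset y 0]
    exact congrArg Prod.fst (f.injective hfe)
  · have hz := f.apply_symm_apply (z, 0)
    rw [← Prod.mk.eta (p := f.symm (z, 0)), apply_eq hθ hμ hf hset] at hz
    exact congrArg Prod.fst hz

noncomputable def toAutStar : AutStar F A where
  α := Equiv.ofBijective _ (bijective_fst_apply_zero hθ hμ hf hset)
  mapMul x y := (apply_mul_zero hθ hμ hf hset x y).1
  mapOne := fst_apply_one hset 0
  β := ⟨Equiv.ofBijective _ (bijective_snd_apply_one hset),
    snd_apply_one_add hθ hμ hf hset⟩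
  τ x := (f (x, 0)).2
  τone := by
    have h := snd_apply_one_add hθ hμ hf hset 0 0
    rwa [add_zero, left_eq_add] at h

theorem actC_toAutStar : actC θ (toAutStar hθ hμ hf hset) = μ := by
  set g := toAutStar hθ hμ hf hset
  funext u v
  have hα (x : F) : g.α x = (f (x, 0)).1 := rfl
  have hsymm : g.α.symm (u * v) = g.α.symm u * g.α.symm v := by
    rw [Equiv.symm_apply_eq, g.mapMul, Equiv.apply_symm_apply, Equiv.apply_symm_apply]
  have hrel := (apply_mul_zero hθ hμ hf hset (g.α.symm u) (g.α.symm v)).2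
  rw [← hα, ← hα, Equiv.apply_symm_apply, Equiv.apply_symm_apply] at hrel
  rw [actC, hsymm, hrel]
  rfl

end ExtIso

theorem inSameOrbit_iff_extIso {F : Type u} {A : Type v} [Loop F] [AddCommGroup A]
    {θ μ : F → F → A} (hθ : IsCocycle θ) (hμ : IsCocycle μ) :
    InSameOrbit θ μ ↔ ExtIso θ μ :=
  ⟨extIso_of_inSameOrbit, fun ⟨_, hf, hset⟩ => ⟨_, ExtIso.actC_toAutStar hθ hμ hf hset⟩⟩

/-- Two normalized cocycles lie in the same Aut*(F,A)-orbit iff the corresponding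
central extensions are isomorphic via an isomorphism carrying {1}×A onto itself;
consequently, the orbits of Aut*(F,A) on C(F,A) are in bijection with the
isomorphism classes of central extensions of F by A. -/
theorem stmt10 {F : Type u} {A : Type v} [Loop F] [AddCommGroup A] :
    (∀ θ μ : F → F → A, IsCocycle θ → IsCocycle μ →
      (InSameOrbit θ μ ↔ ExtIso θ μ)) ∧
    Nonempty
      ((Quot fun θ μ : {θ : F → F → A // IsCocycle θ} => InSameOrbit θ.1 μ.1) ≃
       (Quot fun θ μ : {θ : F → F → A // IsCocycle θ} => ExtIso θ.1 μ.1)) :=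
  ⟨fun _ _ => inSameOrbit_iff_extIso,
    ⟨Quot.congrRight fun θ μ => inSameOrbit_iff_extIso θ.2 μ.2⟩⟩
end

section
/- Let L be a loop with a central subgroup A ≅ C_p^d (p prime), F = L/A, and φ : L → F the quotient map. Then A is a proper subgroup of Z_p(L) if and only if there exists a nontrivial element z ∈ Z_p(F) whose full preimage φ⁻¹(z) is contained in Z_p(L). -/
universe u v

section helpers
variable {Q : Type u} [Loop Q]

lemma lp_right_cancel {a x y : Q} (h : x * a = y * a) : x = y :=
  (Loop.mulRight_bij a).1 h

lemma lp_central_mul {a b : Q} (ha : IsCentral (fun x y : Q => x*y) a)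
    (hb : IsCentral (fun x y : Q => x*y) b) :
    IsCentral (fun x y : Q => x*y) (a*b) := by
  obtain ⟨ac, a1, a2, a3⟩ := ha
  obtain ⟨bc, b1, b2, b3⟩ := hb
  simp only [IsCentral] at *
  refine ⟨?_, ?_, ?_, ?_⟩
  · intro x
    calc (a*b)*x = a*(b*x) := (a1 b x).symm
      _ = a*(x*b) := by rw [bc]
      _ = (a*x)*b := b3 a x
      _ = (x*a)*b := by rw [ac]
      _ = x*(a*b) := (b3 x a).symm
  · intro x y
    calc (a*b)*(x*y) = a*(b*(x*y)) := (a1 b (x*y)).symm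
      _ = a*((b*x)*y) := by rw [b1]
      _ = (a*(b*x))*y := a1 (b*x) y
      _ = ((a*b)*x)*y := by rw [a1]
  · intro x y
    calc x*((a*b)*y) = x*(a*(b*y)) := by rw [a1]
      _ = (x*a)*(b*y) := a2 x (b*y)
      _ = ((x*a)*b)*y := b2 (x*a) y
      _ = (x*(a*b))*y := by rw [a2]
  · intro x y
    calc x*(y*(a*b)) = x*((y*a)*b) := by rw [a2]
      _ = (x*(y*a))*b := b3 x (y*a)
      _ = ((x*y)*a)*b := by rw [a3]
      _ = (x*y)*(a*b) := (a2 (x*y) b).symm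

lemma lp_lpow_central {a : Q} (ha : IsCentral (fun x y : Q => x*y) a) (n : ℕ) :
    IsCentral (fun x y : Q => x*y) (lpow (fun x y : Q => x*y) a n) := by
  induction n with
  | zero => exact ha
  | succ n ih => exact lp_central_mul ih ha

lemma lp_lpow_mul {a u : Q} (ha : IsCentral (fun x y : Q => x*y) a)
    (hu : IsCentral (fun x y : Q => x*y) u) (n : ℕ) :
    lpow (fun x y : Q => x*y) (a*u) n
      = lpow (fun x y : Q => x*y) a n * lpow (fun x y : Q => x*y) u n := by
  induction n with
  | zero => rfl
  | succ n ih =>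
    obtain ⟨ac', a1', a2', a3'⟩ := ha
    have ac : ∀ x : Q, a*x = x*a := ac'
    have a1 : ∀ x y : Q, a*(x*y) = (a*x)*y := a1'
    have a2 : ∀ x y : Q, x*(a*y) = (x*a)*y := a2'
    have a3 : ∀ x y : Q, x*(y*a) = (x*y)*a := a3'
    set A := lpow (fun x y : Q => x*y) a n with hA
    set U := lpow (fun x y : Q => x*y) u n with hU
    have hAc := lp_lpow_central ⟨ac', a1', a2', a3'⟩ n
    show lpow (fun x y : Q => x*y) (a*u) n * (a*u) = (A*a) * (U*u)
    rw [ih]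
    calc (A*U)*(a*u) = A*(U*(a*u)) := (hAc.2.1 U (a*u)).symm
      _ = A*((U*a)*u) := by rw [a2]
      _ = A*((a*U)*u) := by rw [ac]
      _ = A*(a*(U*u)) := by rw [a1]
      _ = (A*a)*(U*u) := a2 A (U*u)
end helpers

lemma lp_hom_lpow {L : Type u} {F : Type v} [Loop L] [Loop F]
    (φ : L → F) (hhom : ∀ u v : L, φ (u * v) = φ u * φ v) (u : L) (n : ℕ) :
    φ (lpow (fun x y : L => x*y) u n) = lpow (fun x y : F => x*y) (φ u) n := by
  induction n with
  | zero => rfl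
  | succ n ih => show φ (_ * u) = _ * φ u; rw [hhom, ih]


/-- Let L be a loop with central subgroup A ≅ C_p^d, F = L/A with quotient map φ.
Then A is a proper subgroup of Z_p(L) iff there is a nontrivial z ∈ Z_p(F) whose
full preimage φ⁻¹(z) is contained in Z_p(L).
Here z^p = 1 is expressed as `lpow mul z (p-1) = 1` (left-normed powers). -/
theorem stmt13 {L : Type u} {F : Type v} [Loop L] [Loop F]
    (p d : ℕ) (hp : p.Prime)
    (φ : L → F) (hsurj : Function.Surjective φ)
    (hhom : ∀ u v : L, φ (u * v) = φ u * φ v)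
    (A : Set L) (hker : ∀ u : L, φ u = 1 ↔ u ∈ A)
    (hcent : ∀ a ∈ A, IsCentral (fun x y : L => x * y) a)
    (horder : ∀ a ∈ A, lpow (fun x y : L => x * y) a (p - 1) = 1)
    (hmulA : ∀ a ∈ A, ∀ b ∈ A, a * b ∈ A)
    (e : A ≃ (Fin d → ZMod p))
    (he : ∀ a b : A, e ⟨a.1 * b.1, hmulA a.1 a.2 b.1 b.2⟩ = e a + e b) :
    (∃ u : L, IsCentral (fun x y : L => x * y) u ∧
        lpow (fun x y : L => x * y) u (p - 1) = 1 ∧ u ∉ A) ↔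
    (∃ z : F, z ≠ 1 ∧ IsCentral (fun x y : F => x * y) z ∧
        lpow (fun x y : F => x * y) z (p - 1) = 1 ∧
        (∀ u : L, φ u = z →
          IsCentral (fun x y : L => x * y) u ∧
          lpow (fun x y : L => x * y) u (p - 1) = 1)) := by
  have hφ1 : φ 1 = 1 := by
    have h := hhom 1 1
    rw [Loop.mul_one] at h
    have : φ 1 * φ 1 = 1 * φ 1 := by rw [← h, Loop.one_mul]
    exact lp_right_cancel this
  constructor
  · rintro ⟨u, hu, hup, huA⟩
    refine ⟨φ u, fun h => huA ((hker u).1 h), ?_, ?_, ?_⟩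
    · obtain ⟨uc', u1', u2', u3'⟩ := hu
      have uc : ∀ x : L, u*x = x*u := uc'
      have u1 : ∀ x y : L, u*(x*y) = (u*x)*y := u1'
      have u2 : ∀ x y : L, x*(u*y) = (x*u)*y := u2'
      have u3 : ∀ x y : L, x*(y*u) = (x*y)*u := u3'
      refine ⟨?_, ?_, ?_, ?_⟩
      · intro x'
        obtain ⟨x, rfl⟩ := hsurj x'
        show φ u * φ x = φ x * φ u
        rw [← hhom, ← hhom, uc]
      · intro x' y'
        obtain ⟨x, rfl⟩ := hsurj x'
        obtain ⟨y, rfl⟩ := hsurj y'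
        show φ u * (φ x * φ y) = (φ u * φ x) * φ y
        rw [← hhom, ← hhom, ← hhom, ← hhom, u1]
      · intro x' y'
        obtain ⟨x, rfl⟩ := hsurj x'
        obtain ⟨y, rfl⟩ := hsurj y'
        show φ x * (φ u * φ y) = (φ x * φ u) * φ y
        rw [← hhom, ← hhom, ← hhom, ← hhom, u2]
      · intro x' y'
        obtain ⟨x, rfl⟩ := hsurj x'
        obtain ⟨y, rfl⟩ := hsurj y'
        show φ x * (φ y * φ u) = (φ x * φ y) * φ u
        rw [← hhom, ← hhom, ← hhom, ← hhom, u3]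
    · rw [← lp_hom_lpow φ hhom, hup, hφ1]
    · intro v hv
      obtain ⟨a, ha⟩ := (Loop.mulRight_bij u).2 v
      simp only at ha
      have hφa : φ a = 1 := by
        apply lp_right_cancel (a := φ u)
        rw [← hhom, ha, hv, Loop.one_mul]
      have haA : a ∈ A := (hker a).1 hφa
      have hac := hcent a haA
      subst ha
      constructor
      · exact lp_central_mul hac hu
      · rw [lp_lpow_mul hac hu, horder a haA, hup, Loop.one_mul]
  · rintro ⟨z, hz1, _, _, hpre⟩
    obtain ⟨u, rfl⟩ := hsurj z
    exact ⟨u, (hpre u rfl).1, (hpre u rfl).2, fun hA => hz1 ((hker u).2 hA)⟩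
end

section
/- Let F be a finite loop, p a prime, d ≥ 1, z ∈ Z_p(F)\{1}, and (α,β,τ) ∈ Aut*(F,F_p^d). Then the image of the subspace C(F,p^d,z) under the action of (α,β,τ) equals C(F,p^d,z^α). In particular, the subgroup Aut*(F,p^d,z) = {(α,β,τ) ∈ Aut*(F,F_p^d) : ⟨z^α⟩ = ⟨z⟩} acts on C(F,p^d,z). -/
universe u v

/-- The four centrality identities for θ relative to z. -/
def CentralConds {F : Type u} {A : Type v} [Mul F] [AddCommGroup A]
    (θ : F → F → A) (z : F) : Prop :=
  (∀ x : F, θ x z = θ z x) ∧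
  (∀ x y : F, θ x y + θ (x * y) z = θ y z + θ x (y * z)) ∧
  (∀ x y : F, θ x z + θ (x * z) y = θ z y + θ x (z * y)) ∧
  (∀ x y : F, θ z x + θ (z * x) y = θ x y + θ z (x * y))

/-- Membership in C(F,p^d,z): normalized cocycle satisfying the centrality
identities for z together with θ(z,z)+θ(z²,z)+⋯+θ(z^{p−1},z) = 0. -/
def InCz {F : Type u} [Mul F] [One F] (p d : ℕ)
    (θ : F → F → (Fin d → ZMod p)) (z : F) : Prop :=
  IsCocycle θ ∧ CentralConds θ z ∧
    ∑ i ∈ Finset.range (p - 1), θ (lpow (fun x y : F => x * y) z i) z = 0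

/-- The cyclic subloop generated by z (left-normed powers together with 1). -/
def genSet {F : Type u} [Mul F] [One F] (z : F) : Set F :=
  insert (1 : F) {w : F | ∃ n : ℕ, lpow (fun x y : F => x * y) z n = w}

/-!
For z central in F with z^p = 1, a normalized cocycle θ lies in C(F,p^d,z) exactly when
(z,a) is central in the extension X(F,F_p^d,θ) with (z,a)^p = (1,0), for one (equivalently,
every) a: the coordinate a does not affect centrality, and it contributes p•a = 0 to the
second coordinate of (z,a)^p.
The map (x,a) ↦ (x^α, a^β + τ(x)) is an isomorphism X(θ) → X(θ^(α,β,τ)) sending (z,0) to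
(z^α, τ(z)), so it carries C(F,p^d,z) into C(F,p^d,z^α), and the inverse triple gives the
reverse inclusion. If moreover ⟨z^α⟩ = ⟨z⟩, then z is a power of z^α, and powers of a central
element of order p of X(θ) are again central of order dividing p.
-/

section Magma

variable {Q R : Type*} {m : Q → Q → Q} {c : Q}

theorem IsCentral.mul {a b : Q} (ha : IsCentral m a) (hb : IsCentral m b) :
    IsCentral m (m a b) := by
  obtain ⟨ac, a2, a3, a4⟩ := ha
  obtain ⟨bc, b2, b3, b4⟩ := hb
  refine ⟨fun x => ?_, fun x y => ?_, fun x y => ?_, fun x y => ?_⟩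
  · calc m (m a b) x = m a (m b x) := (b3 a x).symm
      _ = m a (m x b) := by rw [bc]
      _ = m (m a x) b := b4 a x
      _ = m (m x a) b := by rw [ac]
      _ = m x (m a b) := (a3 x b).symm
  · calc m (m a b) (m x y) = m a (m b (m x y)) := (b3 a _).symm
      _ = m a (m (m b x) y) := by rw [b2]
      _ = m (m a (m b x)) y := a2 _ _
      _ = m (m (m a b) x) y := by rw [b3]
  · calc m x (m (m a b) y) = m x (m a (m b y)) := by rw [← b3 a y]
      _ = m (m x a) (m b y) := a3 x (m b y)
      _ = m (m (m x a) b) y := b3 (m x a) y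
      _ = m (m x (m a b)) y := by rw [a3 x b]
  · rw [a3 y b, a3 (m x y) b, b4 x (m y a), a4 x y]

theorem IsCentral.lpow (hc : IsCentral m c) (n : ℕ) : IsCentral m (lpow m c n) := by
  induction n with
  | zero => exact hc
  | succ n ih => exact ih.mul hc

theorem IsCentral.map_of_surjective {n : R → R → R} {f : Q → R}
    (hf : ∀ x y, f (m x y) = n (f x) (f y)) (hsurj : Function.Surjective f)
    (hc : IsCentral m c) : IsCentral n (f c) := by
  obtain ⟨c1, c2, c3, c4⟩ := hc
  refine ⟨hsurj.forall.2 fun x => ?_, hsurj.forall₂.2 fun x y => ?_,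
    hsurj.forall₂.2 fun x y => ?_, hsurj.forall₂.2 fun x y => ?_⟩ <;> simp only [← hf]
  exacts [congrArg f (c1 x), congrArg f (c2 x y), congrArg f (c3 x y), congrArg f (c4 x y)]

theorem lpow_map {n : R → R → R} (f : Q → R) (hf : ∀ x y, f (m x y) = n (f x) (f y))
    (c : Q) (k : ℕ) : lpow n (f c) k = f (lpow m c k) := by
  induction k with
  | zero => rfl
  | succ k ih => simp only [lpow, ih, hf]

theorem lpow_add (hc : IsCentral m c) (a b : ℕ) :
    m (lpow m c a) (lpow m c b) = lpow m c (a + b + 1) := by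
  induction b with
  | zero => rfl
  | succ b ih =>
      show m (lpow m c a) (m (lpow m c b) c) = _
      rw [hc.2.2.2, ih]
      rfl

theorem lpow_lpow (hc : IsCentral m c) (k n : ℕ) :
    lpow m (lpow m c k) n = lpow m c (k * n + k + n) := by
  induction n with
  | zero => simp [lpow]
  | succ n ih =>
      show m (lpow m (lpow m c k) n) (lpow m c k) = _
      rw [ih, lpow_add hc]
      congr 1
      ring

theorem lpow_add_mul_succ_of_lpow_eq {e : Q} (hc : IsCentral m c) (he : ∀ x, m x e = x)
    {n : ℕ} (hn : lpow m c n = e) (a k : ℕ) :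
    lpow m c (a + k * (n + 1)) = lpow m c a := by
  induction k with
  | zero => simp
  | succ k ih =>
      rw [show a + (k + 1) * (n + 1) = a + k * (n + 1) + n + 1 by ring, ← lpow_add hc, hn,
        he, ih]

end Magma

section Extension

variable {F : Type*} {A : Type*} [AddCommGroup A] {θ : F → F → A}

theorem isCentral_cmul_iff [Mul F] {z : F} {a : A} :
    IsCentral (cmul θ) (z, a) ↔ IsCentral (fun x y : F => x * y) z ∧ CentralConds θ z := by
  simp only [IsCentral, CentralConds, cmul, Prod.forall, Prod.mk.injEq]
  constructor
  · rintro ⟨h1, h2, h3, h4⟩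
    refine ⟨⟨fun x => (h1 x 0).1, fun x y => (h2 x 0 y 0).1, fun x y => (h3 x 0 y 0).1,
      fun x y => (h4 x 0 y 0).1⟩, fun x => ?_, fun x y => ?_, fun x y => ?_, fun x y => ?_⟩
    · linear_combination (norm := abel) -(h1 x 0).2
    · linear_combination (norm := abel) -(h4 x 0 y 0).2
    · linear_combination (norm := abel) -(h3 x 0 y 0).2
    · linear_combination (norm := abel) -(h2 x 0 y 0).2
  · rintro ⟨⟨z1, z2, z3, z4⟩, c1, c2, c3, c4⟩
    refine ⟨fun x b => ⟨z1 x, ?_⟩, fun x b y c => ⟨z2 x y, ?_⟩, fun x b y c => ⟨z3 x y, ?_⟩,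
      fun x b y c => ⟨z4 x y, ?_⟩⟩
    · linear_combination (norm := abel) -c1 x
    · linear_combination (norm := abel) -c4 x y
    · linear_combination (norm := abel) -c3 x y
    · linear_combination (norm := abel) -c2 x y

theorem lpow_cmul [Mul F] (x : F) (a : A) (n : ℕ) :
    lpow (cmul θ) (x, a) n =
      (lpow (fun u v : F => u * v) x n,
        (n + 1) • a + ∑ i ∈ Finset.range n, θ (lpow (fun u v : F => u * v) x i) x) := by
  induction n with
  | zero => simp [lpow]
  | succ n ih =>
      simp only [lpow, ih, cmul, Finset.sum_range_succ, succ_nsmul _ (n + 1), Prod.mk.injEq,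
        true_and]
      abel

theorem cmul_one_zero [Loop F] (hθ : IsCocycle θ) (q : F × A) : cmul θ q (1, 0) = q := by
  simp [cmul, Loop.mul_one, (hθ q.1).2]

end Extension

theorem inCz_iff {F : Type*} [Mul F] [One F] {p d : ℕ} (hp : p ≠ 0)
    {θ : F → F → (Fin d → ZMod p)} {z : F} (hz : IsCentral (fun x y : F => x * y) z)
    (hzp : lpow (fun x y : F => x * y) z (p - 1) = 1) (a : Fin d → ZMod p) :
    InCz p d θ z ↔
      IsCocycle θ ∧ IsCentral (cmul θ) (z, a) ∧ lpow (cmul θ) (z, a) (p - 1) = (1, 0) := by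
  rw [isCentral_cmul_iff, lpow_cmul, Nat.sub_add_cancel (Nat.one_le_iff_ne_zero.2 hp),
    ZModModule.char_nsmul_eq_zero, zero_add, hzp]
  simp [InCz, hz]

namespace AutStar

variable {F : Type*} {A : Type*} [Mul F] [One F] [AddCommGroup A]

theorem α_symm_mul (g : AutStar F A) (x y : F) :
    g.α.symm (x * y) = g.α.symm x * g.α.symm y :=
  g.α.injective (by rw [g.mapMul]; simp only [Equiv.apply_symm_apply])

theorem α_symm_one (g : AutStar F A) : g.α.symm 1 = 1 :=
  g.α.injective (by rw [Equiv.apply_symm_apply, g.mapOne])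

def inv (g : AutStar F A) : AutStar F A where
  α := g.α.symm
  mapMul := g.α_symm_mul
  mapOne := g.α_symm_one
  β := g.β.symm
  τ := fun x => - g.β.symm (g.τ (g.α.symm x))
  τone := by simp only [g.α_symm_one, g.τone, map_zero, neg_zero]

end AutStar

section Action

variable {F : Type*} {A : Type*} [AddCommGroup A]

theorem actC_actC_inv [Mul F] [One F] (g : AutStar F A) (θ : F → F → A) :
    actC (actC θ g.inv) g = θ := by
  funext x y
  simp only [actC, AutStar.inv, Equiv.symm_symm, Equiv.apply_symm_apply,
    Equiv.symm_apply_apply, g.α_symm_mul, map_add, map_sub, map_neg,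
    AddEquiv.apply_symm_apply]
  abel

theorem actP_cmul [Mul F] [One F] (θ : F → F → A) (g : AutStar F A) (q r : F × A) :
    actP (cmul θ q r) g = cmul (actC θ g) (actP q g) (actP r g) := by
  simp only [actP, cmul, actC, ← g.mapMul, Equiv.symm_apply_apply, map_add, Prod.mk.injEq,
    true_and]
  abel

theorem actP_surjective [Mul F] [One F] (g : AutStar F A) :
    Function.Surjective (actP · g) := fun q =>
  ⟨(g.α.symm q.1, g.β.symm (q.2 - g.τ (g.α.symm q.1))), by simp [actP]⟩

theorem IsCocycle.actC [Loop F] {θ : F → F → A} (hθ : IsCocycle θ) (g : AutStar F A) :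
    IsCocycle (actC θ g) := fun x => by
  simp [_root_.actC, g.α_symm_one, (hθ _).1, (hθ _).2, g.τone, Loop.one_mul, Loop.mul_one]

end Action

section Main

variable {F : Type*} [Loop F] {p d : ℕ} {θ : F → F → (Fin d → ZMod p)}

theorem InCz.actC (hp : p ≠ 0) {z : F} (hz : IsCentral (fun x y : F => x * y) z)
    (hzp : lpow (fun x y : F => x * y) z (p - 1) = 1) (g : AutStar F (Fin d → ZMod p))
    (hθ : InCz p d θ z) : InCz p d (actC θ g) (g.α z) := by
  obtain ⟨hcoc, hc, hcp⟩ := (inCz_iff hp hz hzp 0).1 hθ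
  have hφ := actP_cmul θ g
  have hzα : IsCentral (fun x y : F => x * y) (g.α z) :=
    hz.map_of_surjective g.mapMul g.α.surjective
  have hzαp : lpow (fun x y : F => x * y) (g.α z) (p - 1) = 1 := by
    rw [lpow_map _ g.mapMul, hzp, g.mapOne]
  refine (inCz_iff hp hzα hzαp (actP (z, 0) g).2).2
    ⟨hcoc.actC g, hc.map_of_surjective (f := (actP · g)) hφ (actP_surjective g), ?_⟩
  calc lpow (cmul (_root_.actC θ g)) (actP (z, 0) g) (p - 1)
      = actP (lpow (cmul θ) (z, 0) (p - 1)) g := lpow_map (actP · g) hφ _ _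
    _ = (1, 0) := by simp [hcp, actP, g.mapOne, g.τone]

theorem InCz.of_lpow_eq (hp : p ≠ 0) {w z : F} (hw : IsCentral (fun x y : F => x * y) w)
    (hwp : lpow (fun x y : F => x * y) w (p - 1) = 1) (hθ : InCz p d θ w) {k : ℕ}
    (hk : lpow (fun x y : F => x * y) w k = z) : InCz p d θ z := by
  obtain ⟨hcoc, hc, hcp⟩ := (inCz_iff hp hw hwp 0).1 hθ
  set ζ := lpow (cmul θ) (w, 0) k
  have hζ1 : ζ.1 = z := hk ▸ (lpow_map Prod.fst (fun _ _ => rfl) _ k).symm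
  have hζp : lpow (cmul θ) ζ (p - 1) = (1, 0) := by
    rw [lpow_lpow hc, show k * (p - 1) + k + (p - 1) = (p - 1) + k * (p - 1 + 1) by ring,
      lpow_add_mul_succ_of_lpow_eq hc (cmul_one_zero hcoc) hcp, hcp]
  have hzp : lpow (fun x y : F => x * y) z (p - 1) = 1 := by
    have := congrArg Prod.fst hζp
    rwa [← lpow_map Prod.fst (fun _ _ => rfl), hζ1] at this
  have hζ : (z, ζ.2) = ζ := by rw [← hζ1]
  refine (inCz_iff hp (hk ▸ hw.lpow k) hzp ζ.2).2 ⟨hcoc, ?_, ?_⟩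
  · rw [hζ]
    exact hc.lpow k
  · rwa [hζ]

end Main

theorem stmt16_general {F : Type u} [Loop F] (p d : ℕ) (hp : p.Prime)
    (z : F) (hz1 : z ≠ 1)
    (hzc : IsCentral (fun x y : F => x * y) z)
    (hzp : lpow (fun x y : F => x * y) z (p - 1) = 1)
    (g : AutStar F (Fin d → ZMod p)) :
    ((fun θ => actC θ g) '' {θ : F → F → (Fin d → ZMod p) | InCz p d θ z} =
      {θ : F → F → (Fin d → ZMod p) | InCz p d θ (g.α z)}) ∧
    (genSet (g.α z) = genSet z →
      ∀ θ : F → F → (Fin d → ZMod p), InCz p d θ z → InCz p d (actC θ g) z) := by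
  have hzα : IsCentral (fun x y : F => x * y) (g.α z) :=
    hzc.map_of_surjective g.mapMul g.α.surjective
  have hzαp : lpow (fun x y : F => x * y) (g.α z) (p - 1) = 1 := by
    rw [lpow_map _ g.mapMul, hzp, g.mapOne]
  refine ⟨Set.Subset.antisymm ?_ fun θ' hθ' => ?_, fun hgen θ hθ => ?_⟩
  · rintro _ ⟨θ, hθ, rfl⟩
    exact hθ.actC hp.ne_zero hzc hzp g
  · refine ⟨actC θ' g.inv, ?_, actC_actC_inv g θ'⟩
    simpa [AutStar.inv] using hθ'.actC hp.ne_zero hzα hzαp g.inv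
  · have hz : z ∈ genSet (g.α z) := by
      rw [hgen]
      exact Set.mem_insert_of_mem _ ⟨0, rfl⟩
    obtain ⟨k, hk⟩ := (Set.mem_insert_iff.1 hz).resolve_left hz1
    exact (hθ.actC hp.ne_zero hzc hzp g).of_lpow_eq hp.ne_zero hzα hzαp hk

/-- The image of C(F,p^d,z) under the action of (α,β,τ) equals C(F,p^d,z^α);
in particular, the subgroup Aut*(F,p^d,z) = {(α,β,τ) : ⟨z^α⟩ = ⟨z⟩} acts on
C(F,p^d,z). -/
theorem stmt16 {F : Type u} [Loop F] [Fintype F] (p d : ℕ) (hp : p.Prime)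
    (hd : 1 ≤ d) (z : F) (hz1 : z ≠ 1)
    (hzc : IsCentral (fun x y : F => x * y) z)
    (hzp : lpow (fun x y : F => x * y) z (p - 1) = 1)
    (g : AutStar F (Fin d → ZMod p)) :
    ((fun θ => actC θ g) '' {θ : F → F → (Fin d → ZMod p) | InCz p d θ z} =
      {θ : F → F → (Fin d → ZMod p) | InCz p d θ (g.α z)}) ∧
    (genSet (g.α z) = genSet z →
      ∀ θ : F → F → (Fin d → ZMod p), InCz p d θ z → InCz p d (actC θ g) z) :=
  stmt16_general p d hp z hz1 hzc hzp g
end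

section
/- Let F be an elementary abelian p-group C_p^n (n ≥ 2) and z, z' two distinct nontrivial elements with ⟨z⟩ ≠ ⟨z'⟩. Let d ≥ 1 and let θ ∈ C(F,p^d,z) ∩ C(F,p^d,z') be a cocycle for which both (z,0) and (z',0) are central of order p in L = X(F,F_p^d,θ). Then there is an automorphism φ of L with φ(z,0) = (z',0) and φ fixing {1}×F_p^d setwise; consequently θ^{(α₀,β₀,τ₀)} = θ for some (α₀,β₀,τ₀) ∈ Aut*(F,F_p^d) with z^{α₀} = z'. -/
universe u v

/-!
Pick functionals `f, g` dual to `z, z'` and let `w` be the projection of `F` onto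
`ker f ∩ ker g` along `⟨z, z'⟩`. As `(z,0)` and `(z',0)` are central of order `p`,
`x ↦ (w x, 0)·(z,0)^(f x)·(z',0)^(g x)` is a section of `L → F` whose multiplication defect is
`θ (w x) (w y)`; its second coordinate `P` therefore gives `θ = θ ∘ (w × w) + δP`.
The linear involution `α` exchanging the `z`- and `z'`-coordinates satisfies `w ∘ α = w`, so
`θ ∘ (α × α) = θ + δ(P ∘ α - P)`, and the shear `(x, a) ↦ (α x, a + P (α x) - P x)` is the
required automorphism.
-/

section Loop

variable {Q : Type*} {op : Q → Q → Q} {c e : Q}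

theorem IsCentral.mul_s19 (hc : IsCentral op c) (he : IsCentral op e) :
    IsCentral op (op c e) := by
  obtain ⟨c1, c2, c3, c4⟩ := hc
  obtain ⟨e1, e2, e3, e4⟩ := he
  refine ⟨fun x => ?_, fun x y => ?_, fun x y => ?_, fun x y => ?_⟩
  · calc op (op c e) x = op c (op e x) := (c2 e x).symm
      _ = op c (op x e) := by rw [e1]
      _ = op (op c x) e := e4 c x
      _ = op (op x c) e := by rw [c1]
      _ = op x (op c e) := (e4 x c).symm
  · calc op (op c e) (op x y) = op c (op e (op x y)) := (c2 _ _).symm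
      _ = op c (op (op e x) y) := by rw [e2]
      _ = op (op c (op e x)) y := c2 _ _
      _ = op (op (op c e) x) y := by rw [c2 e x]
  · calc op x (op (op c e) y) = op x (op c (op e y)) := by rw [c2]
      _ = op (op x c) (op e y) := c3 _ _
      _ = op (op (op x c) e) y := e3 _ _
      _ = op (op x (op c e)) y := by rw [← e4 x c]
  · calc op x (op y (op c e)) = op x (op (op y c) e) := by rw [e4 y c]
      _ = op (op x (op y c)) e := e4 _ _
      _ = op (op (op x y) c) e := by rw [c4]
      _ = op (op x y) (op c e) := (c3 _ _).symm

theorem IsCentral.mul_mul_mul (hc : IsCentral op c) (he : IsCentral op e) (q r : Q) :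
    op (op q c) (op r e) = op (op q r) (op c e) := by
  obtain ⟨c1, -, c3, c4⟩ := hc
  calc op (op q c) (op r e) = op (op (op q c) r) e := he.2.2.2 _ _
    _ = op (op q (op c r)) e := by rw [← c3 q r]
    _ = op (op q (op r c)) e := by rw [c1]
    _ = op (op (op q r) c) e := by rw [c4]
    _ = op (op q r) (op c e) := (c3 _ _).symm

end Loop

section Powers

variable {F A : Type*} [Monoid F] [AddCommGroup A] {θ : F → F → A}

theorem IsCocycle.cmul_one (hθ : IsCocycle θ) (q : F × A) : cmul θ q (1, 0) = q := by
  simp [cmul, (hθ q.1).2]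

theorem IsCocycle.one_cmul (hθ : IsCocycle θ) (q : F × A) : cmul θ (1, 0) q = q := by
  simp [cmul, (hθ q.1).1]

theorem IsCocycle.isCentral_one (hθ : IsCocycle θ) : IsCentral (cmul θ) ((1 : F), (0 : A)) := by
  refine ⟨fun x => ?_, fun x y => ?_, fun x y => ?_, fun x y => ?_⟩ <;>
    simp [hθ.cmul_one, hθ.one_cmul]

variable (θ) in
def cmulPow (q : F × A) : ℕ → F × A
  | 0 => (1, 0)
  | k + 1 => cmul θ (cmulPow q k) q

variable {q : F × A}

theorem cmulPow_fst (k : ℕ) : (cmulPow θ q k).1 = q.1 ^ k := by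
  induction k with
  | zero => simp [cmulPow]
  | succ k ih => simp [cmulPow, cmul, ih, pow_succ]

theorem isCentral_cmulPow (hθ : IsCocycle θ) (hq : IsCentral (cmul θ) q) (k : ℕ) :
    IsCentral (cmul θ) (cmulPow θ q k) := by
  induction k with
  | zero => exact hθ.isCentral_one
  | succ k ih => exact ih.mul_s19 hq

theorem cmulPow_add (hθ : IsCocycle θ) (hq : IsCentral (cmul θ) q) (m k : ℕ) :
    cmul θ (cmulPow θ q m) (cmulPow θ q k) = cmulPow θ q (m + k) := by
  induction k with
  | zero => exact hθ.cmul_one _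
  | succ k ih =>
    change cmul θ (cmulPow θ q m) (cmul θ (cmulPow θ q k) q) = cmul θ (cmulPow θ q (m + k)) q
    rw [hq.2.2.2, ih]

theorem cmulPow_succ (hθ : IsCocycle θ) (k : ℕ) : cmulPow θ q (k + 1) = lpow (cmul θ) q k := by
  induction k with
  | zero => exact hθ.one_cmul q
  | succ k ih => exact congrArg (cmul θ · q) ih

theorem cmulPow_mod (hθ : IsCocycle θ) (hq : IsCentral (cmul θ) q) {p : ℕ}
    (hord : cmulPow θ q p = (1, 0)) (k : ℕ) : cmulPow θ q k = cmulPow θ q (k % p) := by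
  conv_lhs => rw [← Nat.mod_add_div k p]
  induction k / p with
  | zero => rfl
  | succ m ih => rw [Nat.mul_succ, ← add_assoc, ← cmulPow_add hθ hq, ih, hord, hθ.cmul_one]

variable {p : ℕ}

variable (θ) in
def cmulPowZMod (q : F × A) (a : ZMod p) : F × A := cmulPow θ q a.val

theorem isCentral_cmulPowZMod (hθ : IsCocycle θ) (hq : IsCentral (cmul θ) q) (a : ZMod p) :
    IsCentral (cmul θ) (cmulPowZMod θ q a) :=
  isCentral_cmulPow hθ hq a.val

theorem cmulPowZMod_add [NeZero p] (hθ : IsCocycle θ) (hq : IsCentral (cmul θ) q)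
    (hord : cmulPow θ q p = (1, 0)) (a b : ZMod p) :
    cmul θ (cmulPowZMod θ q a) (cmulPowZMod θ q b) = cmulPowZMod θ q (a + b) := by
  rw [cmulPowZMod, cmulPowZMod, cmulPowZMod, cmulPow_add hθ hq, cmulPow_mod hθ hq hord,
    ZMod.val_add]

end Powers

section Split

variable {F A : Type*} [Monoid F] [AddCommGroup A] {p : ℕ}

variable (θ : F → F → A) in
def splitElem (c c' : F × A) (u : F) (a b : ZMod p) : F × A :=
  cmul θ (cmul θ (u, 0) (cmulPowZMod θ c a)) (cmulPowZMod θ c' b)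

variable {θ : F → F → A} {c c' : F × A}

theorem splitElem_fst (u : F) (a b : ZMod p) :
    (splitElem θ c c' u a b).1 = u * c.1 ^ a.val * c'.1 ^ b.val := by
  simp [splitElem, cmul, cmulPowZMod, cmulPow_fst]

theorem cmul_cmul_snd (u : F) (s : A) (q r : F × A) :
    (cmul θ (cmul θ (u, s) q) r).2 = s + (cmul θ (cmul θ (u, 0) q) r).2 := by
  simp only [cmul]
  abel

theorem splitElem_mul_snd [NeZero p] (hθ : IsCocycle θ)
    (hc : IsCentral (cmul θ) c) (hcord : cmulPow θ c p = (1, 0))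
    (hc' : IsCentral (cmul θ) c') (hc'ord : cmulPow θ c' p = (1, 0))
    (u u' : F) (a a' b b' : ZMod p) :
    (cmul θ (splitElem θ c c' u a b) (splitElem θ c c' u' a' b')).2
      = θ u u' + (splitElem θ c c' (u * u') (a + a') (b + b')).2 := by
  have hu : cmul θ (u, 0) (u', 0) = (u * u', θ u u') := by simp [cmul]
  rw [splitElem, splitElem, IsCentral.mul_mul_mul (isCentral_cmulPowZMod hθ hc' b)
      (isCentral_cmulPowZMod hθ hc' b'), IsCentral.mul_mul_mul (isCentral_cmulPowZMod hθ hc a)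
      (isCentral_cmulPowZMod hθ hc a'), cmulPowZMod_add hθ hc hcord,
    cmulPowZMod_add hθ hc' hc'ord, hu, cmul_cmul_snd, splitElem]

end Split

theorem map_map_eq_add_coboundary {F A : Type*} [Mul F] [AddCommGroup A] {θ : F → F → A}
    {w α : F → F} {P : F → A} (hθ : ∀ x y, θ x y = θ (w x) (w y) + coboundary P x y)
    (hα : ∀ x y, α (x * y) = α x * α y) (hwα : ∀ x, w (α x) = w x) (x y : F) :
    θ (α x) (α y) = θ x y + coboundary (fun x => P (α x) - P x) x y := by
  rw [hθ (α x), hθ x, hwα, hwα]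
  simp only [coboundary, hα]
  abel

section Transfer

variable {F A : Type*} [Monoid F] [AddCommGroup A] {θ : F → F → A} {α : F ≃* F}
  {τ : F → A}

def AutStar.ofMulEquiv (α : F ≃* F) (τ : F → A) (hτ : τ 1 = 0) : AutStar F A :=
  ⟨α.toEquiv, map_mul α, map_one α, AddEquiv.refl A, τ, hτ⟩

theorem actC_ofMulEquiv (hτ : τ 1 = 0)
    (h : ∀ x y, θ (α x) (α y) = θ x y + coboundary τ x y) :
    actC θ (AutStar.ofMulEquiv α τ hτ) = θ := by
  funext x y
  obtain ⟨u, rfl⟩ := α.surjective x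
  obtain ⟨v, rfl⟩ := α.surjective y
  simp only [actC, AutStar.ofMulEquiv, ← map_mul, MulEquiv.toEquiv_eq_coe,
    MulEquiv.coe_toEquiv_symm, MulEquiv.symm_apply_apply, AddEquiv.refl_apply, h, coboundary]
  abel

variable (α τ) in
def shearEquiv : F × A ≃ F × A :=
  Equiv.prodShear α.toEquiv fun x => Equiv.addRight (τ x)

theorem shearEquiv_apply (q : F × A) : shearEquiv α τ q = (α q.1, q.2 + τ q.1) := rfl

theorem shearEquiv_cmul (h : ∀ x y, θ (α x) (α y) = θ x y + coboundary τ x y) (q r : F × A) :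
    shearEquiv α τ (cmul θ q r) = cmul θ (shearEquiv α τ q) (shearEquiv α τ r) := by
  simp only [shearEquiv_apply, cmul, map_mul, h, coboundary, Prod.mk.injEq, true_and]
  abel

theorem shearEquiv_image_fst_eq_one :
    shearEquiv α τ '' {q | q.1 = 1} = {q | q.1 = 1} := by
  ext ⟨x, a⟩
  constructor
  · rintro ⟨⟨y, b⟩, hy : y = 1, hq⟩
    rw [shearEquiv_apply] at hq
    change x = 1
    rw [← (Prod.mk.inj hq).1, hy, map_one]
  · rintro (hx : x = 1)
    refine ⟨(1, a - τ 1), rfl, ?_⟩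
    simp [shearEquiv_apply, hx]

end Transfer

section Coordinates

variable {R V : Type*} [CommRing R] [AddCommGroup V] [Module R V]
  {f g : Module.Dual R V} {z z' : V}

variable (f g z z') in
def complProj : V →ₗ[R] V := LinearMap.id - f.smulRight z - g.smulRight z'

variable (f g z z') in
def swapCoords : V →ₗ[R] V := LinearMap.id + (f - g).smulRight (z' - z)

theorem complProj_apply (x : V) : complProj f g z z' x = x - f x • z - g x • z' := rfl

theorem swapCoords_apply (x : V) : swapCoords f g z z' x = x + (f x - g x) • (z' - z) := rfl

theorem complProj_add_add (x : V) : complProj f g z z' x + f x • z + g x • z' = x := by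
  rw [complProj_apply]
  abel

theorem apply_swapCoords_left (hf : f z = 1) (hf' : f z' = 0) (x : V) :
    f (swapCoords f g z z' x) = g x := by
  rw [swapCoords_apply, map_add, map_smul, map_sub, hf, hf', smul_eq_mul]
  ring

theorem apply_swapCoords_right (hg : g z = 0) (hg' : g z' = 1) (x : V) :
    g (swapCoords f g z z' x) = f x := by
  rw [swapCoords_apply, map_add, map_smul, map_sub, hg, hg', smul_eq_mul]
  ring

theorem complProj_swapCoords (hf : f z = 1) (hf' : f z' = 0) (hg : g z = 0) (hg' : g z' = 1)
    (x : V) : complProj f g z z' (swapCoords f g z z' x) = complProj f g z z' x := by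
  rw [complProj_apply, apply_swapCoords_left hf hf', apply_swapCoords_right hg hg',
    swapCoords_apply, complProj_apply]
  module

theorem swapCoords_involutive (hf : f z = 1) (hf' : f z' = 0) (hg : g z = 0) (hg' : g z' = 1) :
    Function.Involutive (swapCoords f g z z') := by
  intro x
  rw [swapCoords_apply (swapCoords f g z z' x), apply_swapCoords_left hf hf',
    apply_swapCoords_right hg hg', swapCoords_apply]
  module

theorem swapCoords_left (hf : f z = 1) (hg : g z = 0) : swapCoords f g z z' z = z' := by
  simp [swapCoords, hf, hg]

theorem complProj_left (hf : f z = 1) (hg : g z = 0) : complProj f g z z' z = 0 := by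
  simp [complProj, hf, hg]

theorem complProj_right (hf' : f z' = 0) (hg' : g z' = 1) : complProj f g z z' z' = 0 := by
  simp [complProj, hf', hg']

end Coordinates

theorem LinearIndependent.exists_dual_apply_eq_single {K V ι : Type*} [Field K] [AddCommGroup V]
    [Module K V] {v : ι → V} (hv : LinearIndependent K v) :
    ∃ e : ι → Module.Dual K V, ∀ i j, e i (v j) = Finsupp.single j 1 i := by
  obtain ⟨E, hE⟩ := LinearMap.exists_extend hv.repr
  refine ⟨fun i => Finsupp.lapply i ∘ₗ E, fun i j => ?_⟩
  have hj := LinearMap.congr_fun hE ⟨v j, Submodule.subset_span (Set.mem_range_self j)⟩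
  simp only [LinearMap.comp_apply, Submodule.subtype_apply] at hj
  simp [hj, hv.repr_eq_single j ⟨v j, _⟩ rfl]

theorem pow_val_eq_ofAdd_smul {p : ℕ} [NeZero p] {V : Type*} [AddCommGroup V] [Module (ZMod p) V]
    (x : Multiplicative V) (b : ZMod p) : x ^ b.val = Multiplicative.ofAdd (b • x.toAdd) := by
  rw [← ZMod.natCast_zmod_val b, Nat.cast_smul_eq_nsmul, ZMod.val_natCast_of_lt b.val_lt]
  rfl

theorem linearIndependent_pair_of_zpowers_ne {p : ℕ} [Fact p.Prime] {V : Type*} [AddCommGroup V]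
    [Module (ZMod p) V] {z z' : Multiplicative V} (hz : z ≠ 1) (hz' : z' ≠ 1)
    (h : Subgroup.zpowers z ≠ Subgroup.zpowers z') :
    LinearIndependent (ZMod p) ![z.toAdd, z'.toAdd] := by
  rw [LinearIndependent.pair_iff' (toAdd_eq_zero.not.2 hz)]
  intro a ha
  have ha0 : a ≠ 0 := by
    rintro rfl
    exact hz' (toAdd_eq_zero.1 (by rw [← ha, zero_smul]))
  have hz'z : z' = z ^ a.val := by rw [pow_val_eq_ofAdd_smul, ha, ofAdd_toAdd]
  have hzz' : z = z' ^ a⁻¹.val := by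
    rw [pow_val_eq_ofAdd_smul, ← ha, smul_smul, inv_mul_cancel₀ ha0, one_smul, ofAdd_toAdd]
  apply h
  apply le_antisymm <;> rw [Subgroup.zpowers_le]
  · exact hzz' ▸ pow_mem (Subgroup.mem_zpowers z') _
  · exact hz'z ▸ pow_mem (Subgroup.mem_zpowers z) _

section Decomposition

open Multiplicative

variable {p : ℕ} [Fact p.Prime] {V A : Type*} [AddCommGroup V] [Module (ZMod p) V]
  [AddCommGroup A] {θ : Multiplicative V → Multiplicative V → A}
  {f g : Module.Dual (ZMod p) V} {z z' : V}

variable (θ f g z z') in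
def splitSnd (x : Multiplicative V) : A :=
  (splitElem θ (ofAdd z, 0) (ofAdd z', 0) (ofAdd (complProj f g z z' x.toAdd))
    (f x.toAdd) (g x.toAdd)).2

theorem splitElem_complProj (x : Multiplicative V) :
    splitElem θ (ofAdd z, 0) (ofAdd z', 0) (ofAdd (complProj f g z z' x.toAdd))
      (f x.toAdd) (g x.toAdd) = (x, splitSnd θ f g z z' x) := by
  refine Prod.ext ?_ rfl
  rw [splitElem_fst, pow_val_eq_ofAdd_smul, pow_val_eq_ofAdd_smul]
  exact congrArg ofAdd (complProj_add_add x.toAdd)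

theorem eq_comp_complProj_add_coboundary (hθ : IsCocycle θ)
    (hz : IsCentral (cmul θ) (ofAdd z, 0)) (hzord : cmulPow θ (ofAdd z, 0) p = (1, 0))
    (hz' : IsCentral (cmul θ) (ofAdd z', 0)) (hz'ord : cmulPow θ (ofAdd z', 0) p = (1, 0))
    (x y : Multiplicative V) :
    θ x y = θ (ofAdd (complProj f g z z' x.toAdd)) (ofAdd (complProj f g z z' y.toAdd))
      + coboundary (splitSnd θ f g z z') x y := by
  have h := splitElem_mul_snd hθ hz hzord hz' hz'ord (ofAdd (complProj f g z z' x.toAdd))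
    (ofAdd (complProj f g z z' y.toAdd)) (f x.toAdd) (f y.toAdd) (g x.toAdd) (g y.toAdd)
  have hxy : splitElem θ (ofAdd z, 0) (ofAdd z', 0)
      (ofAdd (complProj f g z z' x.toAdd) * ofAdd (complProj f g z z' y.toAdd))
      (f x.toAdd + f y.toAdd) (g x.toAdd + g y.toAdd) = (x * y, splitSnd θ f g z z' (x * y)) := by
    rw [← splitElem_complProj, toAdd_mul, (complProj f g z z').map_add, f.map_add, g.map_add]
    rfl
  rw [splitElem_complProj, splitElem_complProj, hxy] at h
  simp only [cmul] at h
  rw [coboundary, ← add_sub_assoc, ← add_sub_assoc, ← h]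
  abel

theorem splitSnd_left (hθ : IsCocycle θ) (hf : f z = 1) (hg : g z = 0) :
    splitSnd θ f g z z' (ofAdd z) = 0 := by
  simp [splitSnd, splitElem, complProj_left hf hg, hf, hg, cmulPowZMod, cmulPow, ZMod.val_one,
    hθ.one_cmul, hθ.cmul_one]

theorem splitSnd_right (hθ : IsCocycle θ) (hf' : f z' = 0) (hg' : g z' = 1) :
    splitSnd θ f g z z' (ofAdd z') = 0 := by
  simp [splitSnd, splitElem, complProj_right hf' hg', hf', hg', cmulPowZMod, cmulPow, ZMod.val_one,
    hθ.one_cmul]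

end Decomposition

theorem stmt19_general (p n d : ℕ) (hp : p.Prime)
    (z z' : Multiplicative (Fin n → ZMod p))
    (hz1 : z ≠ 1) (hz'1 : z' ≠ 1)
    (hzz' : Subgroup.zpowers z ≠ Subgroup.zpowers z')
    (θ : Multiplicative (Fin n → ZMod p) → Multiplicative (Fin n → ZMod p) →
      (Fin d → ZMod p))
    (hθ : IsCocycle θ)
    (hzcen : IsCentral (cmul θ) (z, (0 : Fin d → ZMod p)))
    (hzord : lpow (cmul θ) (z, (0 : Fin d → ZMod p)) (p - 1) = (1, 0))
    (hz'cen : IsCentral (cmul θ) (z', (0 : Fin d → ZMod p)))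
    (hz'ord : lpow (cmul θ) (z', (0 : Fin d → ZMod p)) (p - 1) = (1, 0)) :
    (∃ φ : (Multiplicative (Fin n → ZMod p) × (Fin d → ZMod p)) ≃
        (Multiplicative (Fin n → ZMod p) × (Fin d → ZMod p)),
      (∀ q r, φ (cmul θ q r) = cmul θ (φ q) (φ r)) ∧
      φ (z, 0) = (z', 0) ∧
      φ '' {q | q.1 = 1} = {q | q.1 = 1}) ∧
    (∃ g : AutStar (Multiplicative (Fin n → ZMod p)) (Fin d → ZMod p),
      actC θ g = θ ∧ g.α z = z') := by
  have := Fact.mk hp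
  have hord : ∀ q, lpow (cmul θ) q (p - 1) = (1, 0) → cmulPow θ q p = (1, 0) := fun q h => by
    rw [← h, ← cmulPow_succ hθ, Nat.sub_add_cancel hp.one_le]
  obtain ⟨e, he⟩ :=
    (linearIndependent_pair_of_zpowers_ne (p := p) hz1 hz'1 hzz').exists_dual_apply_eq_single
  have hf : e 0 z.toAdd = 1 := by simpa using he 0 0
  have hf' : e 0 z'.toAdd = 0 := by simpa using he 0 1
  have hg : e 1 z.toAdd = 0 := by simpa using he 1 0
  have hg' : e 1 z'.toAdd = 1 := by simpa using he 1 1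
  let α := AddEquiv.toMultiplicative
    (LinearEquiv.ofInvolutive _ (swapCoords_involutive hf hf' hg hg')).toAddEquiv
  have hαz : α z = z' := congrArg Multiplicative.ofAdd (swapCoords_left hf hg)
  set P := splitSnd θ (e 0) (e 1) z.toAdd z'.toAdd
  have hτ := map_map_eq_add_coboundary
    (eq_comp_complProj_add_coboundary hθ hzcen (hord _ hzord) hz'cen (hord _ hz'ord)) (map_mul α)
    (fun x => congrArg Multiplicative.ofAdd (complProj_swapCoords hf hf' hg hg' x.toAdd))
  have hτ1 : P (α 1) - P 1 = 0 := by rw [map_one, sub_self]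
  have hPz : P z = 0 := splitSnd_left hθ hf hg
  have hPz' : P z' = 0 := splitSnd_right hθ hf' hg'
  refine ⟨⟨shearEquiv α _, shearEquiv_cmul hτ, ?_, shearEquiv_image_fst_eq_one⟩,
    ⟨AutStar.ofMulEquiv α _ hτ1, actC_ofMulEquiv hτ1 hτ, hαz⟩⟩
  change (α z, 0 + (P (α z) - P z)) = (z', 0)
  rw [hαz, hPz, hPz', sub_zero, add_zero]

/-- For an elementary abelian p-group F = C_p^n and distinct central directions
z, z' with ⟨z⟩ ≠ ⟨z'⟩, any cocycle θ for which both (z,0) and (z',0) are central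
of order p in L = X(F,F_p^d,θ) admits an automorphism φ of L with
φ(z,0) = (z',0) fixing {1}×F_p^d setwise; consequently θ^{(α₀,β₀,τ₀)} = θ
for some (α₀,β₀,τ₀) ∈ Aut*(F,F_p^d) with z^{α₀} = z'. -/
theorem stmt19 (p n d : ℕ) (hp : p.Prime) (hn : 2 ≤ n) (hd : 1 ≤ d)
    (z z' : Multiplicative (Fin n → ZMod p))
    (hz1 : z ≠ 1) (hz'1 : z' ≠ 1)
    (hzz' : Subgroup.zpowers z ≠ Subgroup.zpowers z')
    (θ : Multiplicative (Fin n → ZMod p) → Multiplicative (Fin n → ZMod p) →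
      (Fin d → ZMod p))
    (hθ : IsCocycle θ)
    (hzcen : IsCentral (cmul θ) (z, (0 : Fin d → ZMod p)))
    (hzord : lpow (cmul θ) (z, (0 : Fin d → ZMod p)) (p - 1) = (1, 0))
    (hz'cen : IsCentral (cmul θ) (z', (0 : Fin d → ZMod p)))
    (hz'ord : lpow (cmul θ) (z', (0 : Fin d → ZMod p)) (p - 1) = (1, 0)) :
    (∃ φ : (Multiplicative (Fin n → ZMod p) × (Fin d → ZMod p)) ≃
        (Multiplicative (Fin n → ZMod p) × (Fin d → ZMod p)),
      (∀ q r, φ (cmul θ q r) = cmul θ (φ q) (φ r)) ∧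
      φ (z, 0) = (z', 0) ∧
      φ '' {q | q.1 = 1} = {q | q.1 = 1}) ∧
    (∃ g : AutStar (Multiplicative (Fin n → ZMod p)) (Fin d → ZMod p),
      actC θ g = θ ∧ g.α z = z') :=
  stmt19_general p n d hp z z' hz1 hz'1 hzz' θ hθ hzcen hzord hz'cen hz'ord
end
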